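/- arXiv:2103.12891 — 5 statements merged into one kernel-verified Lean document; each statement's English description precedes it below -/
import Mathlib

section
/- With the setting of the preceding K₂-functional formula, for s ∈ (0,1) one has (2 sin(πs)/π) ∫₀^∞ t^{-1-2s} K₂(t,v)² dt = Σ_k λ_k^{2s} v_k², provided the right-hand side is finite. -/
/-!
Each term integrates separately: the substitutions `u = λ t` and `y = u ^ 2` give
`∫₀^∞ t^(-1-2s) λ²t²/(1+λ²t²) dt = λ^(2s) / 2 · ∫₀^∞ y^(-s)/(1+y) dy`, and the substitution
`y = x/(1-x)` turns the last integral into the Beta integral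
`B(1-s, s) = Γ(1-s) Γ(s) = π / sin(πs)`.
The terms are nonnegative, so the series may be integrated termwise as soon as the resulting
series `Σ λ_k^(2s) v_k²` converges.
-/

open MeasureTheory Real Set

lemma integral_Ioo_rpow_neg_mul_one_sub_rpow {s : ℝ} (hs0 : 0 < s) (hs1 : s < 1) :
    ∫ t in Ioo (0:ℝ) 1, t ^ (-s) * (1 - t) ^ (s - 1) = π / sin (π * s) := by
  have hbeta : Complex.betaIntegral (1 - s) s = (π / sin (π * s) : ℝ) := by
    have h := Complex.Gamma_mul_Gamma_eq_betaIntegral (s := 1 - (s:ℂ)) (t := s)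
      (by simpa using hs1) (by simpa using hs0)
    rw [sub_add_cancel, Complex.Gamma_one, one_mul] at h
    rw [← h, mul_comm, Complex.Gamma_mul_Gamma_one_sub]
    push_cast [Complex.ofReal_sin]
    ring_nf
  have hreal : Complex.betaIntegral (1 - s) s
      = ((∫ t in Ioo (0:ℝ) 1, t ^ (-s) * (1 - t) ^ (s - 1) : ℝ) : ℂ) := by
    rw [Complex.betaIntegral, intervalIntegral.integral_of_le zero_le_one,
      integral_Ioc_eq_integral_Ioo, ← integral_complex_ofReal]
    refine setIntegral_congr_fun measurableSet_Ioo fun t ⟨ht0, ht1⟩ => ?_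
    push_cast
    rw [Complex.ofReal_cpow ht0.le, Complex.ofReal_cpow (sub_nonneg.2 ht1.le)]
    push_cast
    ring_nf
  exact_mod_cast hreal.symm.trans hbeta

lemma integral_Ioi_rpow_neg_div_one_add {s : ℝ} (hs0 : 0 < s) (hs1 : s < 1) :
    ∫ x in Ioi (0:ℝ), x ^ (-s) / (1 + x) = π / sin (π * s) := by
  set f : ℝ → ℝ := fun t => t / (1 - t)
  have himage : f '' Ioo 0 1 = Ioi 0 := by
    ext y
    constructor
    · rintro ⟨t, ⟨ht0, ht1⟩, rfl⟩
      exact div_pos ht0 (sub_pos.2 ht1)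
    · intro (hy : 0 < y)
      refine ⟨y / (1 + y), ⟨by positivity, (div_lt_one (by positivity)).2 (by linarith)⟩, ?_⟩
      simp only [f]
      field_simp
      ring
  have hderiv : ∀ t ∈ Ioo (0:ℝ) 1, HasDerivWithinAt f ((1 - t) ^ 2)⁻¹ (Ioo 0 1) t := by
    intro t ⟨_, ht1⟩
    refine (((hasDerivAt_id t).div ((hasDerivAt_id t).const_sub 1) (sub_pos.2 ht1).ne')
      ).hasDerivWithinAt.congr_deriv ?_
    simp only [id]
    ring
  have hinj : InjOn f (Ioo 0 1) := by
    refine StrictMonoOn.injOn fun a ⟨_, ha1⟩ b ⟨_, hb1⟩ hab => ?_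
    rw [div_lt_div_iff₀ (sub_pos.2 ha1) (sub_pos.2 hb1)]
    nlinarith
  rw [← himage, integral_image_eq_integral_abs_deriv_smul measurableSet_Ioo hderiv hinj,
    ← integral_Ioo_rpow_neg_mul_one_sub_rpow hs0 hs1]
  refine setIntegral_congr_fun measurableSet_Ioo fun t ⟨ht0, ht1⟩ => ?_
  have h1t : 0 < 1 - t := sub_pos.2 ht1
  have hinv : 1 + t / (1 - t) = (1 - t)⁻¹ := by field_simp; ring
  simp only [f, smul_eq_mul]
  rw [hinv, div_rpow ht0.le h1t.le, rpow_neg ht0.le, rpow_neg h1t.le, rpow_sub h1t, rpow_one,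
    abs_of_pos (by positivity)]
  field_simp

lemma integral_Ioi_rpow_mul_sq_div_one_add_sq {s : ℝ} (hs0 : 0 < s) (hs1 : s < 1) :
    ∫ t in Ioi (0:ℝ), t ^ (-1 - 2 * s) * (t ^ 2 / (1 + t ^ 2)) = π / (2 * sin (π * s)) := by
  have h := integral_comp_rpow_Ioi_of_pos (g := fun y => y ^ (-s) / (1 + y)) two_pos
  rw [integral_Ioi_rpow_neg_div_one_add hs0 hs1] at h
  rw [show π / (2 * sin (π * s)) = π / sin (π * s) / 2 by ring, ← h, ← integral_div]
  refine setIntegral_congr_fun measurableSet_Ioi fun t (ht : 0 < t) => ?_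
  have hpow : (t ^ (2:ℝ)) ^ (-s) = t ^ (-1 - 2 * s) * t := by
    rw [← rpow_mul ht.le, ← rpow_add_one ht.ne']
    congr 1
    ring
  rw [smul_eq_mul, hpow, show (2:ℝ) - 1 = 1 by norm_num, rpow_one, rpow_two]
  field_simp

lemma integral_Ioi_rpow_mul_mul_sq_div_one_add_mul_sq {s a : ℝ} (hs0 : 0 < s) (hs1 : s < 1)
    (ha : 0 < a) :
    ∫ t in Ioi (0:ℝ), t ^ (-1 - 2 * s) * (a ^ 2 * t ^ 2 / (1 + a ^ 2 * t ^ 2))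
      = a ^ (2 * s) * (π / (2 * sin (π * s))) := by
  have h := integral_comp_mul_left_Ioi (fun u => u ^ (-1 - 2 * s) * (u ^ 2 / (1 + u ^ 2))) 0 ha
  rw [mul_zero, integral_Ioi_rpow_mul_sq_div_one_add_sq hs0 hs1] at h
  have hscale : ∀ t ∈ Ioi (0:ℝ), t ^ (-1 - 2 * s) * (a ^ 2 * t ^ 2 / (1 + a ^ 2 * t ^ 2))
      = a ^ (1 + 2 * s) * ((a * t) ^ (-1 - 2 * s) * ((a * t) ^ 2 / (1 + (a * t) ^ 2))) := by
    intro t (ht : 0 < t)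
    rw [mul_rpow ha.le ht.le, mul_assoc (a ^ (-1 - 2 * s)), ← mul_assoc (a ^ (1 + 2 * s)),
      ← rpow_add ha, show 1 + 2 * s + (-1 - 2 * s) = 0 by ring, rpow_zero]
    ring
  rw [setIntegral_congr_fun measurableSet_Ioi hscale, integral_const_mul, h, smul_eq_mul,
    ← mul_assoc, ← rpow_neg_one, ← rpow_add ha]
  ring_nf

lemma integrableOn_Ioi_rpow_mul_mul_sq_div_one_add_mul_sq {s a : ℝ} (hs0 : 0 < s) (hs1 : s < 1)
    (ha : 0 < a) :
    IntegrableOn (fun t : ℝ => t ^ (-1 - 2 * s) * (a ^ 2 * t ^ 2 / (1 + a ^ 2 * t ^ 2)))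
      (Ioi 0) := by
  have hsin : 0 < sin (π * s) := sin_pos_of_pos_of_lt_pi (by positivity) (by nlinarith [pi_pos])
  -- a non-integrable function has integral `0`
  refine Integrable.of_integral_ne_zero ?_
  rw [integral_Ioi_rpow_mul_mul_sq_div_one_add_mul_sq hs0 hs1 ha]
  positivity

lemma integral_tsum_of_nonneg {α ι : Type*} [MeasurableSpace α] {μ : Measure α} [Countable ι]
    {f : ι → α → ℝ} (hf : ∀ i, Integrable (f i) μ) (hf0 : ∀ i, 0 ≤ᵐ[μ] f i)
    (hsum : Summable fun i => ∫ a, f i a ∂μ) :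
    ∫ a, ∑' i, f i a ∂μ = ∑' i, ∫ a, f i a ∂μ := by
  refine (integral_tsum_of_summable_integral_norm hf ?_).symm
  refine hsum.congr fun i => integral_congr_ae ?_
  filter_upwards [hf0 i] with a ha
  exact (Real.norm_of_nonneg ha).symm

theorem stmt_4 (lam : ℕ → ℝ) (hlam : ∀ k, 0 < lam k) (c : ℕ → ℝ) (s : ℝ)
    (hs0 : 0 < s) (hs1 : s < 1)
    (hsum : Summable (fun k => lam k ^ (2*s) * (c k)^2)) :
    (2 * Real.sin (π * s) / π) *
        ∫ t in Set.Ioi (0:ℝ),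
          t ^ (-1 - 2*s) * ∑' k, ((lam k)^2 * t^2 / (1 + (lam k)^2 * t^2)) * (c k)^2
      = ∑' k, lam k ^ (2*s) * (c k)^2 := by
  have hsin : 0 < sin (π * s) := sin_pos_of_pos_of_lt_pi (by positivity) (by nlinarith [pi_pos])
  set F : ℕ → ℝ → ℝ := fun k t =>
    t ^ (-1 - 2 * s) * ((lam k) ^ 2 * t ^ 2 / (1 + (lam k) ^ 2 * t ^ 2)) * (c k) ^ 2
  have hF_int : ∀ k, IntegrableOn (F k) (Ioi 0) := fun k =>
    (integrableOn_Ioi_rpow_mul_mul_sq_div_one_add_mul_sq hs0 hs1 (hlam k)).mul_const _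
  have hF_nonneg : ∀ k, 0 ≤ᵐ[volume.restrict (Ioi 0)] F k := fun k => by
    filter_upwards [ae_restrict_mem measurableSet_Ioi] with t (ht : 0 < t)
    positivity
  have hF_val : ∀ k, ∫ t in Ioi 0, F k t = lam k ^ (2 * s) * c k ^ 2 * (π / (2 * sin (π * s))) :=
    fun k => by
      rw [integral_mul_const, integral_Ioi_rpow_mul_mul_sq_div_one_add_mul_sq hs0 hs1 (hlam k)]
      ring
  calc _ = (2 * sin (π * s) / π) * ∫ t in Ioi 0, ∑' k, F k t := by
        simp_rw [F, mul_assoc, tsum_mul_left]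
    _ = (2 * sin (π * s) / π) * ∑' k, lam k ^ (2 * s) * c k ^ 2 * (π / (2 * sin (π * s))) := by
        rw [integral_tsum_of_nonneg hF_int hF_nonneg
          (by simpa only [hF_val] using hsum.mul_right _), tsum_congr hF_val]
    _ = _ := by
        rw [tsum_mul_right]
        field_simp
end

section
/- Let V be a finite-dimensional inner product space decomposed as a sum of subspaces V = Σ_{j=0}^J V_j, with I_j : V_j → V the inclusions, Q_j = I_j^t the orthogonal projections onto V_j, and R_j : V_j → V_j symmetric positive definite operators. Then B := Σ_{j=0}^J I_j R_j Q_j is symmetric positive definite on V, and for every v ∈ V, (B^{-1}v, v) = inf over all decompositions v = Σ_{j=0}^J v_j with v_j ∈ V_j of Σ_{j=0}^J (R_j^{-1} v_j, v_j). -/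
/-!
Write `P_j` for the orthogonal projection onto `V_j`. The quadratic form of `B` is
`⟪B v, v⟫ = ∑ j, ⟪R_j P_j v, P_j v⟫`, which vanishes only if every `P_j v` does, i.e. only if `v`
is orthogonal to `⨆ j, V_j = ⊤`; so `B` is positive definite, hence invertible.

For the variational formula let `B w = v`. Then `g_j = R_j P_j w` decomposes `v`, with energy
`∑ j, ⟪R_j⁻¹ g_j, g_j⟫ = ∑ j, ⟪P_j w, R_j P_j w⟫ = ⟪w, v⟫`. For any other decomposition
`v = ∑ j, f_j`, positivity of `R_j⁻¹` at `f_j - g_j` gives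
`⟪R_j⁻¹ f_j, f_j⟫ ≥ 2 ⟪w, f_j⟫ - ⟪w, g_j⟫`, and summing over `j` bounds its energy below by `⟪w, v⟫`.
-/

open scoped RealInnerProductSpace

namespace LinearMap

variable {E : Type*} [NormedAddCommGroup E] [InnerProductSpace ℝ E]

theorem inner_map_self_nonneg_of_pos {T : E →ₗ[ℝ] E} (hT : ∀ u, u ≠ 0 → 0 < ⟪T u, u⟫)
    (u : E) : 0 ≤ ⟪T u, u⟫ := by
  rcases eq_or_ne u 0 with rfl | hu
  · simp
  · exact (hT u hu).le

theorem bijective_of_inner_map_self_pos [FiniteDimensional ℝ E] {T : E →ₗ[ℝ] E}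
    (hT : ∀ u, u ≠ 0 → 0 < ⟪T u, u⟫) : Function.Bijective T := by
  have hinj : Function.Injective T := by
    refine (injective_iff_map_eq_zero T).mpr fun u hu => ?_
    by_contra hne
    simpa [hu] using hT u hne
  exact ⟨hinj, injective_iff_surjective.mp hinj⟩

theorem IsPositive.two_mul_inner_sub_inner_le {T : E →ₗ[ℝ] E} (hT : T.IsPositive)
    (x y : E) : 2 * ⟪T y, x⟫ - ⟪T y, y⟫ ≤ ⟪T x, x⟫ := by
  have h := hT.inner_nonneg_left (x - y)
  have hsymm : ⟪T x, y⟫ = ⟪T y, x⟫ := by rw [hT.isSymmetric, real_inner_comm]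
  rw [map_sub, inner_sub_left, inner_sub_right, inner_sub_right, hsymm] at h
  linarith

end LinearMap

section AdditiveSchwarz

variable {H : Type*} [NormedAddCommGroup H] [InnerProductSpace ℝ H]
  {ι : Type*} {V : ι → Submodule ℝ H} [∀ j, (V j).HasOrthogonalProjection]

theorem exists_orthogonalProjectionOnto_ne_zero (hspan : ⨆ j, V j = ⊤) {v : H} (hv : v ≠ 0) :
    ∃ j, (V j).orthogonalProjectionOnto v ≠ 0 := by
  by_contra! h
  have hperp : v ∈ (⨆ j, V j)ᗮ := by
    rw [← Submodule.iInf_orthogonal, Submodule.mem_iInf]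
    exact fun j => Submodule.orthogonalProjectionOnto_eq_zero_iff.mp (h j)
  rw [hspan, Submodule.top_orthogonal_eq_bot] at hperp
  exact hv hperp

variable [Fintype ι]

variable (V) in
noncomputable def additiveSchwarz (R : ∀ j, V j →ₗ[ℝ] V j) : H →ₗ[ℝ] H :=
  ∑ j, (V j).subtype ∘ₗ R j ∘ₗ ((V j).orthogonalProjectionOnto : H →ₗ[ℝ] V j)

theorem additiveSchwarz_apply (R : ∀ j, V j →ₗ[ℝ] V j) (v : H) :
    additiveSchwarz V R v = ∑ j, (R j ((V j).orthogonalProjectionOnto v) : H) := by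
  simp [additiveSchwarz]

theorem inner_additiveSchwarz_left (R : ∀ j, V j →ₗ[ℝ] V j) (u w : H) :
    ⟪additiveSchwarz V R u, w⟫ =
      ∑ j, ⟪R j ((V j).orthogonalProjectionOnto u), (V j).orthogonalProjectionOnto w⟫ := by
  simp only [additiveSchwarz_apply, sum_inner,
    Submodule.inner_orthogonalProjectionOnto_eq_of_mem_left]

theorem isSymmetric_additiveSchwarz {R : ∀ j, V j →ₗ[ℝ] V j} (hR : ∀ j, (R j).IsSymmetric) :
    (additiveSchwarz V R).IsSymmetric := fun u w => by
  rw [real_inner_comm (additiveSchwarz V R w) u, inner_additiveSchwarz_left,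
    inner_additiveSchwarz_left]
  exact Finset.sum_congr rfl fun j _ => by rw [hR j, real_inner_comm]

theorem inner_additiveSchwarz_self_pos (hspan : ⨆ j, V j = ⊤) {R : ∀ j, V j →ₗ[ℝ] V j}
    (hR : ∀ j u, u ≠ 0 → 0 < ⟪R j u, u⟫) {v : H} (hv : v ≠ 0) :
    0 < ⟪additiveSchwarz V R v, v⟫ := by
  obtain ⟨j, hj⟩ := exists_orthogonalProjectionOnto_ne_zero hspan hv
  rw [inner_additiveSchwarz_left]
  exact Finset.sum_pos' (fun i _ => LinearMap.inner_map_self_nonneg_of_pos (hR i) _)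
    ⟨j, Finset.mem_univ j, hR j _ hj⟩

theorem isLeast_inner_additiveSchwarz {R : ∀ j, V j ≃ₗ[ℝ] V j}
    (hR : ∀ j, (R j : V j →ₗ[ℝ] V j).IsPositive) {v w : H}
    (hw : additiveSchwarz V (fun j => R j) w = v) :
    IsLeast {r : ℝ | ∃ f : ∀ j, V j, v = ∑ j, (f j : H) ∧ r = ∑ j, ⟪(R j).symm (f j), f j⟫}
      ⟪w, v⟫ := by
  set P : ∀ j, V j := fun j => (V j).orthogonalProjectionOnto w
  have hinner_P : ∀ f : ∀ j, V j, v = ∑ j, (f j : H) → ∑ j, ⟪P j, f j⟫ = ⟪w, v⟫ := by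
    rintro f rfl
    simp only [P, Submodule.inner_orthogonalProjectionOnto_eq_of_mem_right, inner_sum]
  have henergy : ∑ j, ⟪P j, R j (P j)⟫ = ⟪w, v⟫ := by
    rw [← hw, real_inner_comm, inner_additiveSchwarz_left]
    exact Finset.sum_congr rfl fun j _ => real_inner_comm _ _
  constructor
  · refine ⟨fun j => R j (P j), ?_, ?_⟩
    · rw [← hw, additiveSchwarz_apply]
      rfl
    · simpa only [LinearEquiv.symm_apply_apply] using henergy.symm
  · rintro r ⟨f, hf, rfl⟩
    have hlower : ∀ j, 2 * ⟪P j, f j⟫ - ⟪P j, R j (P j)⟫ ≤ ⟪(R j).symm (f j), f j⟫ :=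
      fun j => by
      simpa only [LinearEquiv.coe_coe, LinearEquiv.symm_apply_apply] using
        (hR j).toLinearMap_symm.two_mul_inner_sub_inner_le (f j) (R j (P j))
    have hsum := Finset.sum_le_sum fun j (_ : j ∈ Finset.univ) => hlower j
    rw [Finset.sum_sub_distrib, ← Finset.mul_sum, hinner_P f hf, henergy] at hsum
    linarith

end AdditiveSchwarz

theorem stmt_5 {H : Type*} [NormedAddCommGroup H] [InnerProductSpace ℝ H]
    [FiniteDimensional ℝ H]
    (J : ℕ) (V : Fin (J+1) → Submodule ℝ H) (hspan : (⨆ j, V j) = ⊤)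
    (R Rinv : ∀ j, V j →ₗ[ℝ] V j)
    (hRsymm : ∀ j (u w : V j), ⟪((R j u : V j) : H), (w : H)⟫ = ⟪(u : H), ((R j w : V j) : H)⟫)
    (hRpos : ∀ j (u : V j), u ≠ 0 → 0 < ⟪((R j u : V j) : H), (u : H)⟫)
    (hRinv : ∀ j, (R j).comp (Rinv j) = LinearMap.id ∧ (Rinv j).comp (R j) = LinearMap.id)
    (B : H →ₗ[ℝ] H)
    (hB : ∀ v : H, B v = ∑ j, ((R j ((V j).orthogonalProjectionOnto v) : V j) : H)) :
    (∀ u w : H, ⟪B u, w⟫ = ⟪u, B w⟫) ∧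
    (∀ v : H, v ≠ 0 → 0 < ⟪B v, v⟫) ∧
    Function.Bijective B ∧
    (∀ v w : H, B w = v →
      ⟪w, v⟫ = sInf { r : ℝ | ∃ f : ∀ j, V j, v = ∑ j, ((f j : H)) ∧
        r = ∑ j, ⟪((Rinv j (f j) : V j) : H), ((f j : H))⟫ }) := by
  obtain rfl : B = additiveSchwarz V R :=
    LinearMap.ext fun v => (hB v).trans (additiveSchwarz_apply R v).symm
  let Requiv : ∀ j, V j ≃ₗ[ℝ] V j :=
    fun j => LinearEquiv.ofLinearMap (R j) (Rinv j) (hRinv j).1 (hRinv j).2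
  have hRpositive : ∀ j, (Requiv j : V j →ₗ[ℝ] V j).IsPositive := fun j =>
    (LinearMap.isPositive_iff _).mpr
      ⟨hRsymm j, LinearMap.inner_map_self_nonneg_of_pos (hRpos j)⟩
  have hBpos : ∀ v : H, v ≠ 0 → 0 < ⟪additiveSchwarz V R v, v⟫ :=
    fun v hv => inner_additiveSchwarz_self_pos hspan hRpos hv
  refine ⟨isSymmetric_additiveSchwarz hRsymm, hBpos,
    LinearMap.bijective_of_inner_map_self_pos hBpos,
    fun v w hw => (isLeast_inner_additiveSchwarz (R := Requiv) hRpositive hw).csInf_eq.symm⟩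
end

section
/- Let V be a finite-dimensional inner product space, A : V → V symmetric positive definite, and B = Σ_{j=0}^J I_j R_j Q_j as in the parallel subspace correction preconditioner with each R_j SPD. If (A1) for every v ∈ V there exists a decomposition v = Σ_j v_j with v_j ∈ V_j and Σ_j (R_j^{-1}v_j, v_j) ≤ c₀ (Av, v), then the smallest eigenvalue of BA satisfies λ_min(BA) ≥ c₀^{-1}. If (A2) for every choice of v_j ∈ V_j one has (A(Σ_j v_j), Σ_j v_j) ≤ c₁ Σ_j (R_j^{-1}v_j, v_j), then λ_max(BA) ≤ c₁. Consequently, under (A1) and (A2), the condition number of BA is at most c₀ c₁. -/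
/-!
Both bounds come from one inequality: for a positive operator `T` and any `s`,
`0 ≤ ⟪T (x - s y), x - s y⟫` gives `2 s ⟪T x, y⟫ ≤ ⟪T x, x⟫ + s² ⟪T y, y⟫`.

Lower bound: write `v = ∑ vⱼ` as in (A1), `vⱼ = Rⱼ gⱼ`, `uⱼ = Qⱼ A v`. Then
`⟪A v, v⟫ = ∑ ⟪Rⱼ gⱼ, uⱼ⟫`, and the inequality in each `Vⱼ` with `s = c₀` gives
`2 c₀ ⟪A v, v⟫ ≤ ∑ ⟪Rⱼ⁻¹ vⱼ, vⱼ⟫ + c₀² ⟪B A v, A v⟫ ≤ c₀ ⟪A v, v⟫ + c₀² ⟪B A v, A v⟫`.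

Upper bound: the decomposition `B A v = ∑ Rⱼ uⱼ` has energy `∑ ⟪uⱼ, Rⱼ uⱼ⟫ = ⟪B A v, A v⟫`,
so (A2) and the inequality for `A` with `x = B A v`, `y = v`, `s = c₁` give
`2 c₁ ⟪B A v, A v⟫ ≤ c₁ ⟪B A v, A v⟫ + c₁² ⟪A v, v⟫`.
-/

open scoped RealInnerProductSpace

namespace LinearMap

variable {E : Type*} [NormedAddCommGroup E] [InnerProductSpace ℝ E] {T : E →ₗ[ℝ] E}

theorem isPositive_of_inner_pos (hT : T.IsSymmetric) (hpos : ∀ x, x ≠ 0 → 0 < ⟪T x, x⟫) :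
    T.IsPositive := by
  refine T.isPositive_iff.2 ⟨hT, fun x => ?_⟩
  rcases eq_or_ne x 0 with rfl | hx
  · simp
  · exact (hpos x hx).le

theorem IsPositive.two_mul_inner_le (hT : T.IsPositive) (s : ℝ) (x y : E) :
    2 * s * ⟪T x, y⟫ ≤ ⟪T x, x⟫ + s ^ 2 * ⟪T y, y⟫ := by
  have h := hT.inner_nonneg_left (x - s • y)
  have hyx : ⟪T y, x⟫ = ⟪T x, y⟫ := by rw [hT.isSymmetric y x, real_inner_comm]
  simp only [map_sub, map_smul, inner_sub_left, inner_sub_right, real_inner_smul_left,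
    real_inner_smul_right, hyx] at h
  nlinarith

end LinearMap

section ParallelSubspaceCorrection

variable {H ι : Type*} [NormedAddCommGroup H] [InnerProductSpace ℝ H] [Fintype ι]
  (V : ι → Submodule ℝ H) [∀ j, (V j).HasOrthogonalProjection] (R : ∀ j, V j →ₗ[ℝ] V j)

/-- The parallel subspace correction preconditioner `B = ∑ⱼ Iⱼ Rⱼ Qⱼ`. -/
noncomputable def parallelCorrection : H →ₗ[ℝ] H :=
  ∑ j, (V j).subtype ∘ₗ R j ∘ₗ ((V j).orthogonalProjectionOnto : H →ₗ[ℝ] V j)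

theorem parallelCorrection_apply (v : H) :
    parallelCorrection V R v = ∑ j, (R j ((V j).orthogonalProjectionOnto v) : H) := by
  simp [parallelCorrection]

theorem inner_parallelCorrection_self (u : H) :
    ⟪parallelCorrection V R u, u⟫ =
      ∑ j, ⟪R j ((V j).orthogonalProjectionOnto u), (V j).orthogonalProjectionOnto u⟫ := by
  simp only [parallelCorrection_apply, sum_inner,
    Submodule.inner_orthogonalProjectionOnto_eq_of_mem_left]

variable {V R} {A : H →ₗ[ℝ] H}

theorem inner_comp_parallelCorrection_comp (hA : A.IsSymmetric) (v : H) :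
    ⟪A (parallelCorrection V R (A v)), v⟫ =
      ∑ j, ⟪R j ((V j).orthogonalProjectionOnto (A v)),
        (V j).orthogonalProjectionOnto (A v)⟫ := by
  rw [hA, inner_parallelCorrection_self]

theorem inner_le_mul_inner_parallelCorrection {Rinv : ∀ j, V j →ₗ[ℝ] V j}
    (hR : ∀ j, (R j).IsPositive) (hRRinv : ∀ j x, R j (Rinv j x) = x) (hA : A.IsSymmetric)
    {c₀ : ℝ} (hc₀ : 0 < c₀)
    (hA₁ : ∀ v : H, ∃ f : ∀ j, V j, v = ∑ j, (f j : H) ∧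
      ∑ j, ⟪(Rinv j (f j) : H), (f j : H)⟫ ≤ c₀ * ⟪A v, v⟫) (v : H) :
    ⟪A v, v⟫ ≤ c₀ * ⟪A (parallelCorrection V R (A v)), v⟫ := by
  obtain ⟨f, hv, hf⟩ := hA₁ v
  set u : ∀ j, V j := fun j => (V j).orthogonalProjectionOnto (A v)
  set g : ∀ j, V j := fun j => Rinv j (f j)
  have hq : ⟪A v, v⟫ = ∑ j, ⟪R j (g j), u j⟫ := by
    rw [real_inner_comm]
    nth_rw 1 [hv]
    simp only [sum_inner, g, u, hRRinv,
      Submodule.inner_orthogonalProjectionOnto_eq_of_mem_left]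
  have hb : ∑ j, ⟪(Rinv j (f j) : H), (f j : H)⟫ = ∑ j, ⟪R j (g j), g j⟫ := by
    simp only [g, hRRinv, real_inner_comm (Rinv _ _ : H), Submodule.coe_inner]
  have hyoung : 2 * c₀ * ⟪A v, v⟫ ≤
      ∑ j, ⟪R j (g j), g j⟫ + c₀ ^ 2 * ⟪A (parallelCorrection V R (A v)), v⟫ := by
    rw [hq, inner_comp_parallelCorrection_comp hA, Finset.mul_sum, Finset.mul_sum,
      ← Finset.sum_add_distrib]
    exact Finset.sum_le_sum fun j _ => (hR j).two_mul_inner_le c₀ (g j) (u j)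
  rw [← hb] at hyoung
  exact le_of_mul_le_mul_left (by linarith) hc₀

theorem inner_parallelCorrection_le_mul_inner {Rinv : ∀ j, V j →ₗ[ℝ] V j}
    (hRinvR : ∀ j x, Rinv j (R j x) = x) (hA : A.IsPositive) {c₁ : ℝ} (hc₁ : 0 < c₁)
    (hA₂ : ∀ f : ∀ j, V j, ⟪A (∑ j, (f j : H)), ∑ j, (f j : H)⟫ ≤
      c₁ * ∑ j, ⟪(Rinv j (f j) : H), (f j : H)⟫) (v : H) :
    ⟪A (parallelCorrection V R (A v)), v⟫ ≤ c₁ * ⟪A v, v⟫ := by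
  have hw := hA₂ fun j => R j ((V j).orthogonalProjectionOnto (A v))
  simp only [hRinvR, ← parallelCorrection_apply] at hw
  have henergy : ∑ j, ⟪((V j).orthogonalProjectionOnto (A v) : H),
      (R j ((V j).orthogonalProjectionOnto (A v)) : H)⟫ =
      ⟪A (parallelCorrection V R (A v)), v⟫ := by
    rw [inner_comp_parallelCorrection_comp hA.isSymmetric]
    exact Finset.sum_congr rfl fun j _ => real_inner_comm _ _
  rw [henergy] at hw
  have hyoung := hA.two_mul_inner_le c₁ (parallelCorrection V R (A v)) v
  exact le_of_mul_le_mul_left (by linarith) hc₁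

end ParallelSubspaceCorrection

theorem stmt_6_general {H : Type*} [NormedAddCommGroup H] [InnerProductSpace ℝ H]
    [FiniteDimensional ℝ H]
    (J : ℕ) (V : Fin (J+1) → Submodule ℝ H)
    (R Rinv : ∀ j, V j →ₗ[ℝ] V j)
    (hRsymm : ∀ j (u w : V j), ⟪((R j u : V j) : H), (w : H)⟫ = ⟪(u : H), ((R j w : V j) : H)⟫)
    (hRpos : ∀ j (u : V j), u ≠ 0 → 0 < ⟪((R j u : V j) : H), (u : H)⟫)
    (hRinv : ∀ j, (R j).comp (Rinv j) = LinearMap.id ∧ (Rinv j).comp (R j) = LinearMap.id)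
    (B : H →ₗ[ℝ] H)
    (hB : ∀ v : H, B v = ∑ j, ((R j ((V j).orthogonalProjection v) : V j) : H))
    (A : H →ₗ[ℝ] H)
    (hAsymm : ∀ u w : H, ⟪A u, w⟫ = ⟪u, A w⟫)
    (hApos : ∀ v : H, v ≠ 0 → 0 < ⟪A v, v⟫)
    (c₀ c₁ : ℝ) (hc₀ : 0 < c₀) (hc₁ : 0 < c₁) :
    -- (A1) stable decomposition implies λ_min(BA) ≥ c₀⁻¹
    ((∀ v : H, ∃ f : ∀ j, V j, v = ∑ j, ((f j : H)) ∧
        ∑ j, ⟪((Rinv j (f j) : V j) : H), ((f j : H))⟫ ≤ c₀ * ⟪A v, v⟫) →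
      ∀ v : H, c₀⁻¹ * ⟪A v, v⟫ ≤ ⟪A (B (A v)), v⟫) ∧
    -- (A2) boundedness implies λ_max(BA) ≤ c₁
    ((∀ f : ∀ j, V j,
        ⟪A (∑ j, ((f j : H))), ∑ j, ((f j : H))⟫ ≤
          c₁ * ∑ j, ⟪((Rinv j (f j) : V j) : H), ((f j : H))⟫) →
      ∀ v : H, ⟪A (B (A v)), v⟫ ≤ c₁ * ⟪A v, v⟫) ∧
    -- consequently, under (A1) and (A2), cond(BA) ≤ c₀ c₁
    ((∀ v : H, ∃ f : ∀ j, V j, v = ∑ j, ((f j : H)) ∧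
        ∑ j, ⟪((Rinv j (f j) : V j) : H), ((f j : H))⟫ ≤ c₀ * ⟪A v, v⟫) →
      (∀ f : ∀ j, V j,
        ⟪A (∑ j, ((f j : H))), ∑ j, ((f j : H))⟫ ≤
          c₁ * ∑ j, ⟪((Rinv j (f j) : V j) : H), ((f j : H))⟫) →
      ∀ v w : H,
        ⟪A (B (A v)), v⟫ * ⟪A w, w⟫ ≤ c₀ * c₁ * (⟪A v, v⟫ * ⟪A (B (A w)), w⟫)) := by
  obtain rfl : B = parallelCorrection V R :=
    LinearMap.ext fun v => (hB v).trans (parallelCorrection_apply V R v).symm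
  have hA : A.IsPositive := LinearMap.isPositive_of_inner_pos hAsymm hApos
  have hR : ∀ j, (R j).IsPositive := fun j =>
    LinearMap.isPositive_of_inner_pos (hRsymm j) (hRpos j)
  have hRRinv : ∀ j x, R j (Rinv j x) = x := fun j => LinearMap.congr_fun (hRinv j).1
  have hRinvR : ∀ j x, Rinv j (R j x) = x := fun j => LinearMap.congr_fun (hRinv j).2
  have lower := inner_le_mul_inner_parallelCorrection hR hRRinv hAsymm hc₀
  have upper := inner_parallelCorrection_le_mul_inner hRinvR hA hc₁
  refine ⟨fun hA₁ v => (inv_mul_le_iff₀ hc₀).2 (lower hA₁ v), upper, fun hA₁ hA₂ v w => ?_⟩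
  calc _ ≤ c₁ * ⟪A v, v⟫ * (c₀ * ⟪A (parallelCorrection V R (A w)), w⟫) :=
        mul_le_mul (upper hA₂ v) (lower hA₁ w)
          (hA.inner_nonneg_left w) (mul_nonneg hc₁.le (hA.inner_nonneg_left v))
    _ = _ := by ring

theorem stmt_6 {H : Type*} [NormedAddCommGroup H] [InnerProductSpace ℝ H]
    [FiniteDimensional ℝ H]
    (J : ℕ) (V : Fin (J+1) → Submodule ℝ H) (hspan : (⨆ j, V j) = ⊤)
    (R Rinv : ∀ j, V j →ₗ[ℝ] V j)
    (hRsymm : ∀ j (u w : V j), ⟪((R j u : V j) : H), (w : H)⟫ = ⟪(u : H), ((R j w : V j) : H)⟫)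
    (hRpos : ∀ j (u : V j), u ≠ 0 → 0 < ⟪((R j u : V j) : H), (u : H)⟫)
    (hRinv : ∀ j, (R j).comp (Rinv j) = LinearMap.id ∧ (Rinv j).comp (R j) = LinearMap.id)
    (B : H →ₗ[ℝ] H)
    (hB : ∀ v : H, B v = ∑ j, ((R j ((V j).orthogonalProjection v) : V j) : H))
    (A : H →ₗ[ℝ] H)
    (hAsymm : ∀ u w : H, ⟪A u, w⟫ = ⟪u, A w⟫)
    (hApos : ∀ v : H, v ≠ 0 → 0 < ⟪A v, v⟫)
    (c₀ c₁ : ℝ) (hc₀ : 0 < c₀) (hc₁ : 0 < c₁) :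
    -- (A1) stable decomposition implies λ_min(BA) ≥ c₀⁻¹
    ((∀ v : H, ∃ f : ∀ j, V j, v = ∑ j, ((f j : H)) ∧
        ∑ j, ⟪((Rinv j (f j) : V j) : H), ((f j : H))⟫ ≤ c₀ * ⟪A v, v⟫) →
      ∀ v : H, c₀⁻¹ * ⟪A v, v⟫ ≤ ⟪A (B (A v)), v⟫) ∧
    -- (A2) boundedness implies λ_max(BA) ≤ c₁
    ((∀ f : ∀ j, V j,
        ⟪A (∑ j, ((f j : H))), ∑ j, ((f j : H))⟫ ≤
          c₁ * ∑ j, ⟪((Rinv j (f j) : V j) : H), ((f j : H))⟫) →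
      ∀ v : H, ⟪A (B (A v)), v⟫ ≤ c₁ * ⟪A v, v⟫) ∧
    -- consequently, under (A1) and (A2), cond(BA) ≤ c₀ c₁
    ((∀ v : H, ∃ f : ∀ j, V j, v = ∑ j, ((f j : H)) ∧
        ∑ j, ⟪((Rinv j (f j) : V j) : H), ((f j : H))⟫ ≤ c₀ * ⟪A v, v⟫) →
      (∀ f : ∀ j, V j,
        ⟪A (∑ j, ((f j : H))), ∑ j, ((f j : H))⟫ ≤
          c₁ * ∑ j, ⟪((Rinv j (f j) : V j) : H), ((f j : H))⟫) →
      ∀ v w : H,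
        ⟪A (B (A v)), v⟫ * ⟪A w, w⟫ ≤ c₀ * c₁ * (⟪A v, v⟫ * ⟪A (B (A w)), w⟫)) :=
  stmt_6_general J V R Rinv hRsymm hRpos hRinv B hB A hAsymm hApos c₀ c₁ hc₀ hc₁
end

section
/- Let V be a finite-dimensional inner product space with nested subspaces V_0 ⊂ V_1 ⊂ ... ⊂ V_J = V, Q_j the orthogonal projection onto V_j, Q_{-1} = 0, γ ∈ (0,1), and 0 < s ≤ 1. Then for every v ∈ V, Σ_{j=0}^J γ^{-2sj} ‖(Q_j - Q_{j-1})v‖² equals the infimum over all decompositions v = Σ_{j=0}^J v_j with v_j ∈ V_j of γ^{-2sJ}‖v_J‖² + Σ_{j=0}^{J-1} (γ^{-2sj}/(1-γ^{2s})) ‖v_j‖². -/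
/-!
Write `t = γ ^ (2s)` and `d_k = (Q_k - Q_{k-1}) v`, so that `v = ∑ d_k` with `d_k ∈ V_k` orthogonal
to `V_{k-1}`. The infimum is a weighted least-norm decomposition problem whose weights `w_j` have
tail sums `c_k = ∑_{j ≥ k} w_j⁻¹ = t ^ k`. For an admissible `v = ∑ f_j`, pairing with `d_k` kills
the `f_j` with `j < k`, so `∑_k ‖d_k‖² / c_k = ∑_j ⟪g_j, f_j⟫` where `g_j = ∑_{k ≤ j} d_k / c_k ∈ V_j`.
The decomposition `f_j = g_j / w_j` is admissible, and by the same pairing its cost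
`∑_j ‖g_j‖² / w_j` is `∑_k ‖d_k‖² / c_k`; for any other `f` the bound
`2 ⟪g_j, f_j⟫ ≤ ‖g_j‖² / w_j + w_j ‖f_j‖²` shows that its cost is at least this value.
-/

open Finset RealInnerProductSpace

lemma sum_range_sum_range_succ_comm {M : Type*} [AddCommMonoid M] (J : ℕ) (F : ℕ → ℕ → M) :
    ∑ j ∈ range (J + 1), ∑ k ∈ range (j + 1), F j k
      = ∑ k ∈ range (J + 1), ∑ j ∈ Ico k (J + 1), F j k := by
  simp only [range_eq_Ico]
  exact (sum_Ico_Ico_comm 0 (J + 1) fun k j => F j k).symm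

section GeometricWeights

variable {t : ℝ} {J : ℕ}

noncomputable def geometricWeight (t : ℝ) (J j : ℕ) : ℝ :=
  if j = J then (t ^ J)⁻¹ else (t ^ j)⁻¹ / (1 - t)

lemma geometricWeight_pos (ht0 : 0 < t) (ht1 : t < 1) (j : ℕ) : 0 < geometricWeight t J j := by
  unfold geometricWeight
  split_ifs
  · positivity
  · exact div_pos (by positivity) (by linarith)

lemma sum_Ico_inv_geometricWeight {k : ℕ} (hk : k ≤ J) :
    ∑ j ∈ Ico k (J + 1), (geometricWeight t J j)⁻¹ = t ^ k := by
  have hlow : ∀ j ∈ Ico k J, (geometricWeight t J j)⁻¹ = (1 - t) * t ^ j := fun j hj => by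
    rw [geometricWeight, if_neg (mem_Ico.1 hj).2.ne, inv_div, div_eq_mul_inv, inv_inv]
  rw [sum_Ico_succ_top hk, sum_congr rfl hlow, ← mul_sum, geometricWeight, if_pos rfl, inv_inv]
  rw [mul_comm, ← neg_sub t 1, mul_neg, geom_sum_Ico_mul _ hk]
  ring

lemma sum_geometricWeight_mul_norm_sq {E : Type*} [Norm E] (f : ℕ → E) :
    (t ^ J)⁻¹ * ‖f J‖ ^ 2 + ∑ j ∈ range J, (t ^ j)⁻¹ / (1 - t) * ‖f j‖ ^ 2
      = ∑ j ∈ range (J + 1), geometricWeight t J j * ‖f j‖ ^ 2 := by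
  rw [sum_range_succ, geometricWeight, if_pos rfl, add_comm]
  congr 1
  exact sum_congr rfl fun j hj => by rw [geometricWeight, if_neg (mem_range.1 hj).ne]

end GeometricWeights

section InnerProductSpace

variable {H : Type*} [NormedAddCommGroup H] [InnerProductSpace ℝ H]

lemma two_mul_inner_le_inv_mul_add_mul {w : ℝ} (hw : 0 < w) (x y : H) :
    2 * ⟪x, y⟫ ≤ w⁻¹ * ‖x‖ ^ 2 + w * ‖y‖ ^ 2 := by
  have h := norm_sub_sq_real x (w • y)
  rw [real_inner_smul_right, norm_smul, Real.norm_of_nonneg hw.le] at h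
  rw [← mul_le_mul_iff_of_pos_left hw, mul_add, mul_inv_cancel_left₀ hw.ne']
  nlinarith [sq_nonneg ‖x - w • y‖]

section WeightedDecomposition

variable {V : ℕ → Submodule ℝ H} {d : ℕ → H} {J : ℕ}

lemma inner_sum_Ico_eq_norm_sq (hd_mem : ∀ k, d k ∈ V k)
    (hd_orth : ∀ j k, j < k → d k ∈ (V j)ᗮ) {k : ℕ} (hk : k ≤ J) {f : ℕ → H}
    (hf_mem : ∀ j, f j ∈ V j) (hf_sum : ∑ j ∈ range (J + 1), f j = ∑ j ∈ range (J + 1), d j) :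
    ∑ j ∈ Ico k (J + 1), ⟪d k, f j⟫ = ‖d k‖ ^ 2 := by
  have hdd : ∀ j, j ≠ k → ⟪d k, d j⟫ = 0 := by
    intro j hjk
    rcases hjk.lt_or_gt with h | h
    · exact Submodule.inner_left_of_mem_orthogonal (hd_mem j) (hd_orth j k h)
    · exact Submodule.inner_right_of_mem_orthogonal (hd_mem k) (hd_orth k j h)
  have hlow : ∑ j ∈ range k, ⟪d k, f j⟫ = 0 :=
    sum_eq_zero fun j hj =>
      Submodule.inner_left_of_mem_orthogonal (hf_mem j) (hd_orth j k (mem_range.1 hj))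
  calc ∑ j ∈ Ico k (J + 1), ⟪d k, f j⟫
      = ∑ j ∈ range (J + 1), ⟪d k, f j⟫ := by
        rw [← sum_range_add_sum_Ico _ (by omega : k ≤ J + 1), hlow, zero_add]
    _ = ∑ j ∈ range (J + 1), ⟪d k, d j⟫ := by rw [← inner_sum, hf_sum, inner_sum]
    _ = ‖d k‖ ^ 2 := by
        rw [sum_eq_single_of_mem k (mem_range.2 (by omega)) fun j _ => hdd j,
          real_inner_self_eq_norm_sq]

noncomputable def rescaledPartialSum (c : ℕ → ℝ) (d : ℕ → H) (j : ℕ) : H :=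
  ∑ k ∈ range (j + 1), (c k)⁻¹ • d k

lemma rescaledPartialSum_mem (hV : Monotone V) (hd_mem : ∀ k, d k ∈ V k) (c : ℕ → ℝ) (j : ℕ) :
    rescaledPartialSum c d j ∈ V j :=
  sum_mem fun k hk => Submodule.smul_mem _ _ (hV (Nat.lt_succ_iff.1 (mem_range.1 hk)) (hd_mem k))

lemma sum_inner_rescaledPartialSum (hd_mem : ∀ k, d k ∈ V k)
    (hd_orth : ∀ j k, j < k → d k ∈ (V j)ᗮ) (c : ℕ → ℝ) {f : ℕ → H}
    (hf_mem : ∀ j, f j ∈ V j) (hf_sum : ∑ j ∈ range (J + 1), f j = ∑ j ∈ range (J + 1), d j) :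
    ∑ j ∈ range (J + 1), ⟪rescaledPartialSum c d j, f j⟫
      = ∑ k ∈ range (J + 1), (c k)⁻¹ * ‖d k‖ ^ 2 := by
  simp only [rescaledPartialSum, sum_inner, real_inner_smul_left]
  rw [sum_range_sum_range_succ_comm]
  refine sum_congr rfl fun k hk => ?_
  rw [← mul_sum, inner_sum_Ico_eq_norm_sq hd_mem hd_orth (Nat.lt_succ_iff.1 (mem_range.1 hk))
    hf_mem hf_sum]

variable {w c : ℕ → ℝ}

lemma sum_inv_smul_rescaledPartialSum (hw : ∀ j, 0 < w j)
    (hc : ∀ k ≤ J, ∑ j ∈ Ico k (J + 1), (w j)⁻¹ = c k) :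
    ∑ j ∈ range (J + 1), (w j)⁻¹ • rescaledPartialSum c d j = ∑ k ∈ range (J + 1), d k := by
  simp only [rescaledPartialSum, smul_sum]
  rw [sum_range_sum_range_succ_comm]
  refine sum_congr rfl fun k hk_mem => ?_
  have hk : k ≤ J := Nat.lt_succ_iff.1 (mem_range.1 hk_mem)
  have hck : 0 < c k := hc k hk ▸
    sum_pos (fun j _ => inv_pos.2 (hw j)) ⟨k, mem_Ico.2 ⟨le_rfl, by omega⟩⟩
  rw [← sum_smul, smul_smul, hc k hk, mul_inv_cancel₀ hck.ne', one_smul]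

theorem isLeast_weighted_decomposition (hV : Monotone V) (hd_mem : ∀ k, d k ∈ V k)
    (hd_orth : ∀ j k, j < k → d k ∈ (V j)ᗮ) (hw : ∀ j, 0 < w j)
    (hc : ∀ k ≤ J, ∑ j ∈ Ico k (J + 1), (w j)⁻¹ = c k) :
    IsLeast {r | ∃ f : ℕ → H, (∀ j, f j ∈ V j) ∧
        ∑ k ∈ range (J + 1), d k = ∑ j ∈ range (J + 1), f j ∧
        r = ∑ j ∈ range (J + 1), w j * ‖f j‖ ^ 2}
      (∑ k ∈ range (J + 1), (c k)⁻¹ * ‖d k‖ ^ 2) := by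
  set g := rescaledPartialSum c d
  set f₀ : ℕ → H := fun j => (w j)⁻¹ • g j
  have hf₀_mem : ∀ j, f₀ j ∈ V j := fun j =>
    Submodule.smul_mem _ _ (rescaledPartialSum_mem hV hd_mem c j)
  have hf₀_sum : ∑ j ∈ range (J + 1), f₀ j = ∑ k ∈ range (J + 1), d k :=
    sum_inv_smul_rescaledPartialSum hw hc
  have hg : ∑ j ∈ range (J + 1), (w j)⁻¹ * ‖g j‖ ^ 2
      = ∑ k ∈ range (J + 1), (c k)⁻¹ * ‖d k‖ ^ 2 := by
    rw [← sum_inner_rescaledPartialSum hd_mem hd_orth c hf₀_mem hf₀_sum]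
    simp only [f₀, g, real_inner_smul_right, real_inner_self_eq_norm_sq]
  refine ⟨⟨f₀, hf₀_mem, hf₀_sum.symm, ?_⟩, ?_⟩
  · rw [← hg]
    refine sum_congr rfl fun j _ => ?_
    have := (hw j).ne'
    simp only [f₀, norm_smul, Real.norm_of_nonneg (inv_pos.2 (hw j)).le]
    field_simp
  · rintro r ⟨f, hf_mem, hf_sum, rfl⟩
    have hpair := sum_inner_rescaledPartialSum hd_mem hd_orth c hf_mem hf_sum.symm
    have hamgm : ∑ j ∈ range (J + 1), 2 * ⟪g j, f j⟫
        ≤ ∑ j ∈ range (J + 1), ((w j)⁻¹ * ‖g j‖ ^ 2 + w j * ‖f j‖ ^ 2) :=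
      sum_le_sum fun j _ => two_mul_inner_le_inv_mul_add_mul (hw j) _ _
    rw [← mul_sum, sum_add_distrib, hpair, hg] at hamgm
    linarith

end WeightedDecomposition

section ProjectionIncrement

variable (V : ℕ → Submodule ℝ H) [∀ j, (V j).HasOrthogonalProjection] (v : H)

noncomputable def projIncrement (j : ℕ) : H :=
  if j = 0 then (V 0).starProjection v else (V j).starProjection v - (V (j - 1)).starProjection v

variable {V}

lemma projIncrement_mem (hV : Monotone V) (j : ℕ) : projIncrement V v j ∈ V j := by
  unfold projIncrement
  split_ifs with hj
  · exact hj ▸ Submodule.starProjection_apply_mem _ _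
  · exact sub_mem (Submodule.starProjection_apply_mem _ _)
      (hV (Nat.sub_le j 1) (Submodule.starProjection_apply_mem _ _))

lemma projIncrement_mem_orthogonal (hV : Monotone V) {j k : ℕ} (hjk : j < k) :
    projIncrement V v k ∈ (V j)ᗮ := by
  have hk : k ≠ 0 := by omega
  have hdiff : projIncrement V v k
      = (v - (V (k - 1)).starProjection v) - (v - (V k).starProjection v) := by
    simp only [projIncrement, if_neg hk]
    abel
  rw [hdiff]
  refine Submodule.orthogonal_le (hV (by omega : j ≤ k - 1)) (sub_mem ?_ ?_)
  · exact Submodule.sub_starProjection_mem_orthogonal v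
  · exact Submodule.orthogonal_le (hV (Nat.sub_le k 1))
      (Submodule.sub_starProjection_mem_orthogonal v)

lemma sum_range_projIncrement (n : ℕ) :
    ∑ j ∈ range (n + 1), projIncrement V v j = (V n).starProjection v := by
  induction n with
  | zero => simp [projIncrement]
  | succ n ih =>
    rw [sum_range_succ, ih, projIncrement, if_neg n.succ_ne_zero]
    exact add_sub_cancel _ _

end ProjectionIncrement

end InnerProductSpace

theorem stmt_7_general {H : Type*} [NormedAddCommGroup H] [InnerProductSpace ℝ H]
    [FiniteDimensional ℝ H]
    (J : ℕ) (V : ℕ → Submodule ℝ H) (hnest : ∀ j, V j ≤ V (j+1)) (htop : V J = ⊤)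
    (γ s : ℝ) (hγ0 : 0 < γ) (hγ1 : γ < 1) (hs0 : 0 < s) (v : H) :
    ∑ j ∈ Finset.range (J+1), γ ^ (-2*s*(j:ℝ)) *
        ‖(if j = 0 then ((Submodule.orthogonalProjectionOnto (V 0) v : V 0) : H)
          else ((Submodule.orthogonalProjectionOnto (V j) v : V j) : H)
            - ((Submodule.orthogonalProjectionOnto (V (j-1)) v : V (j-1)) : H))‖^2
      = sInf { r : ℝ | ∃ f : ℕ → H, (∀ j, f j ∈ V j) ∧ v = ∑ j ∈ Finset.range (J+1), f j ∧
          r = γ ^ (-2*s*(J:ℝ)) * ‖f J‖^2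
            + ∑ j ∈ Finset.range J, γ ^ (-2*s*(j:ℝ)) / (1 - γ ^ (2*s)) * ‖f j‖^2 } := by
  set t := γ ^ (2 * s)
  have ht0 : 0 < t := Real.rpow_pos_of_pos hγ0 _
  have ht1 : t < 1 := Real.rpow_lt_one hγ0.le hγ1 (by positivity)
  have hpow (j : ℕ) : γ ^ (-2 * s * (j : ℝ)) = (t ^ j)⁻¹ := by
    rw [show -2 * s * (j : ℝ) = -(2 * s * j) by ring, Real.rpow_neg hγ0.le,
      Real.rpow_mul hγ0.le, Real.rpow_natCast]
  have hmono : Monotone V := monotone_nat_of_le_succ hnest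
  have hsum : ∑ j ∈ range (J + 1), projIncrement V v j = v := by
    rw [sum_range_projIncrement, Submodule.starProjection_eq_self_iff, htop]
    trivial
  have hleast := isLeast_weighted_decomposition (J := J) hmono (projIncrement_mem v hmono)
    (fun _ _ => projIncrement_mem_orthogonal v hmono) (geometricWeight_pos ht0 ht1)
    (fun _ => sum_Ico_inv_geometricWeight)
  rw [hsum] at hleast
  simp only [hpow, Submodule.coe_orthogonalProjectionOnto_apply, sum_geometricWeight_mul_norm_sq]
  exact hleast.csInf_eq.symm

theorem stmt_7 {H : Type*} [NormedAddCommGroup H] [InnerProductSpace ℝ H]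
    [FiniteDimensional ℝ H]
    (J : ℕ) (V : ℕ → Submodule ℝ H) (hnest : ∀ j, V j ≤ V (j+1)) (htop : V J = ⊤)
    (γ s : ℝ) (hγ0 : 0 < γ) (hγ1 : γ < 1) (hs0 : 0 < s) (hs1 : s ≤ 1) (v : H) :
    ∑ j ∈ Finset.range (J+1), γ ^ (-2*s*(j:ℝ)) *
        ‖(if j = 0 then ((Submodule.orthogonalProjectionOnto (V 0) v : V 0) : H)
          else ((Submodule.orthogonalProjectionOnto (V j) v : V j) : H)
            - ((Submodule.orthogonalProjectionOnto (V (j-1)) v : V (j-1)) : H))‖^2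
      = sInf { r : ℝ | ∃ f : ℕ → H, (∀ j, f j ∈ V j) ∧ v = ∑ j ∈ Finset.range (J+1), f j ∧
          r = γ ^ (-2*s*(J:ℝ)) * ‖f J‖^2
            + ∑ j ∈ Finset.range J, γ ^ (-2*s*(j:ℝ)) / (1 - γ ^ (2*s)) * ‖f j‖^2 } :=
  stmt_7_general J V hnest htop γ s hγ0 hγ1 hs0 v
end

section
/- Let w₀, w₁ : Ω → (0,∞) be measurable weights on a measure space Ω, and for a weight w let E(w) be the weighted L² space with norm (∫_Ω |v|² w)^{1/2}. Then for every s ∈ (0,1), the real interpolation space (E(w₀), E(w₁))_{s,2} equals E(w_s) with w_s = w₀^{1-s} w₁^s, and the interpolation norm (with the normalization factor 2 sin(πs)/π in front of ∫₀^∞ t^{-1-2s}K₂(t,v)² dt) is equivalent to the E(w_s)-norm with equivalence constants independent of s. -/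
open MeasureTheory Real ENNReal

/-- The modified `K₂`-functional squared for the couple of weighted `L²` spaces
`(E(w0), E(w1))`, computed in `ℝ≥0∞`. -/
noncomputable def wK2sq {Ω : Type*} [MeasurableSpace Ω] (μ : Measure Ω)
    (w0 w1 : Ω → ℝ) (t : ℝ) (v : Ω → ℝ) : ℝ≥0∞ :=
  sInf { r : ℝ≥0∞ | ∃ v0 v1 : Ω → ℝ, Measurable v0 ∧ Measurable v1 ∧ v = v0 + v1 ∧
    r = (∫⁻ x, ENNReal.ofReal ((v0 x)^2 * w0 x) ∂μ)
      + ENNReal.ofReal (t^2) * ∫⁻ x, ENNReal.ofReal ((v1 x)^2 * w1 x) ∂μ }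

/-!
Minimizing pointwise in the decomposition `v = v₀ + v₁` gives
`K₂(t,v)² = ∫ v² · w₀ t²w₁ / (w₀ + t²w₁)`. By Tonelli and the substitution
`t = √(w₀/w₁) · u`, the `t`-integral becomes `J(s) · ∫ v² w₀^(1-s) w₁^s` with
`J(s) = interpConst s = ∫₀^∞ t^(1-2s) / (1 + t²) dt`, which equals `π / (2 sin πs)`.
Instead of evaluating `J`, comparing `t² / (1 + t²)` with `min (t², 1)` gives
`1 / (4s(1-s)) ≤ J(s) ≤ 1 / (2s(1-s))`, and Jordan's inequality gives
`2s(1-s) ≤ sin πs ≤ 2πs(1-s)`, so `(2 sin πs / π) · J(s)` lies in `[1/π, 2]`.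
-/

open Set

lemma sin_pi_mul_min_one_sub (s : ℝ) : sin (π * min s (1 - s)) = sin (π * s) := by
  rcases min_cases s (1 - s) with ⟨h, _⟩ | ⟨h, _⟩ <;> rw [h]
  rw [mul_sub, mul_one, sin_pi_sub]

lemma two_mul_mul_one_sub_le_sin_pi_mul {s : ℝ} (hs0 : 0 ≤ s) (hs1 : s ≤ 1) :
    2 * s * (1 - s) ≤ sin (π * s) := by
  have hm0 : 0 ≤ min s (1 - s) := le_min hs0 (by linarith)
  have hm : π * min s (1 - s) ≤ π / 2 := by
    nlinarith [pi_pos, min_le_left s (1 - s), min_le_right s (1 - s)]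
  have hjordan := mul_le_sin (by positivity) hm
  rw [sin_pi_mul_min_one_sub, ← mul_assoc, div_mul_cancel₀ _ pi_pos.ne'] at hjordan
  have : s * (1 - s) ≤ min s (1 - s) := le_min (by nlinarith) (by nlinarith)
  linarith

lemma sin_pi_mul_le {s : ℝ} (hs0 : 0 ≤ s) (hs1 : s ≤ 1) :
    sin (π * s) ≤ 2 * π * s * (1 - s) := by
  have hm0 : 0 ≤ min s (1 - s) := le_min hs0 (by linarith)
  have hsin := sin_le (mul_nonneg pi_pos.le hm0)
  rw [sin_pi_mul_min_one_sub] at hsin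
  have : min s (1 - s) ≤ 2 * s * (1 - s) := by
    rcases le_total s (1 / 2) with h | h
    · exact (min_le_left _ _).trans (by nlinarith)
    · exact (min_le_right _ _).trans (by nlinarith)
  nlinarith [pi_pos]

lemma sq_add_mul_div_le {a b : ℝ} (ha : 0 ≤ a) (hb : 0 ≤ b) (x y : ℝ) :
    (x + y) ^ 2 * (a * b / (a + b)) ≤ x ^ 2 * a + y ^ 2 * b := by
  rcases (add_nonneg ha hb).eq_or_lt' with hab | hab
  · rw [hab, _root_.div_zero, mul_zero]; positivity
  rw [mul_div_assoc', div_le_iff₀ hab]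
  nlinarith [sq_nonneg (x * a - y * b)]

lemma sq_mul_add_sq_mul_eq {a b : ℝ} (hab : a + b ≠ 0) (v : ℝ) :
    (v * (b / (a + b))) ^ 2 * a + (v * (a / (a + b))) ^ 2 * b = v ^ 2 * (a * b / (a + b)) := by
  field_simp
  ring

lemma min_sq_one_div_two_le (t : ℝ) : min (t ^ 2) 1 / 2 ≤ t ^ 2 / (1 + t ^ 2) := by
  rw [div_le_div_iff₀ two_pos (by positivity)]
  rcases le_total (t ^ 2) 1 with h | h
  · rw [min_eq_left h]; nlinarith [sq_nonneg t]
  · rw [min_eq_right h]; linarith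

lemma sq_div_one_add_sq_le_min (t : ℝ) : t ^ 2 / (1 + t ^ 2) ≤ min (t ^ 2) 1 := by
  rw [div_le_iff₀ (by positivity)]
  rcases le_total (t ^ 2) 1 with h | h
  · rw [min_eq_left h]; nlinarith [sq_nonneg t]
  · rw [min_eq_right h]; linarith

lemma setLIntegral_Ioc_zero_rpow {a b : ℝ} (ha : -1 < a) (hb : 0 < b) :
    ∫⁻ t in Ioc 0 b, ENNReal.ofReal (t ^ a) = ENNReal.ofReal (b ^ (a + 1) / (a + 1)) := by
  have hint : IntegrableOn (fun t : ℝ => t ^ a) (Ioc 0 b) :=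
    (intervalIntegrable_iff_integrableOn_Ioc_of_le hb.le).1
      (intervalIntegral.intervalIntegrable_rpow' ha)
  rw [← ofReal_integral_eq_lintegral_ofReal hint
      ((ae_restrict_iff' measurableSet_Ioc).2 (ae_of_all _ fun t ht => rpow_nonneg ht.1.le a)),
    ← intervalIntegral.integral_of_le hb.le, integral_rpow (Or.inl ha),
    zero_rpow (by linarith), sub_zero]

lemma setLIntegral_Ioi_rpow {a b : ℝ} (ha : a < -1) (hb : 0 < b) :
    ∫⁻ t in Ioi b, ENNReal.ofReal (t ^ a) = ENNReal.ofReal (-b ^ (a + 1) / (a + 1)) := by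
  rw [← ofReal_integral_eq_lintegral_ofReal (integrableOn_Ioi_rpow_of_lt ha hb)
      ((ae_restrict_iff' measurableSet_Ioi).2
        (ae_of_all _ fun t ht => rpow_nonneg (hb.trans ht).le a)),
    integral_Ioi_rpow_of_lt ha hb]

lemma rpow_neg_one_sub_two_mul_mul_sq {t : ℝ} (ht : 0 < t) (s : ℝ) :
    t ^ (-1 - 2 * s) * t ^ 2 = t ^ (1 - 2 * s) := by
  rw [← Real.rpow_natCast, ← rpow_add ht]
  norm_num
  ring_nf

lemma setLIntegral_Ioi_zero_rpow_mul_min_sq_one {s : ℝ} (hs0 : 0 < s) (hs1 : s < 1) :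
    ∫⁻ t in Ioi 0, ENNReal.ofReal (t ^ (-1 - 2 * s) * min (t ^ 2) 1)
      = ENNReal.ofReal (1 / (2 * s * (1 - s))) := by
  rw [← Ioc_union_Ioi_eq_Ioi zero_le_one,
    lintegral_union measurableSet_Ioi (Ioc_disjoint_Ioi le_rfl)]
  have hnear : ∫⁻ t in Ioc 0 1, ENNReal.ofReal (t ^ (-1 - 2 * s) * min (t ^ 2) 1)
      = ENNReal.ofReal (1 / (2 - 2 * s)) := by
    rw [setLIntegral_congr_fun measurableSet_Ioc (g := fun t => ENNReal.ofReal (t ^ (1 - 2 * s)))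
      fun t ht => by
        rw [min_eq_left (pow_le_one₀ ht.1.le ht.2),
          rpow_neg_one_sub_two_mul_mul_sq ht.1],
      setLIntegral_Ioc_zero_rpow (by linarith) one_pos, Real.one_rpow]
    ring_nf
  have hfar : ∫⁻ t in Ioi 1, ENNReal.ofReal (t ^ (-1 - 2 * s) * min (t ^ 2) 1)
      = ENNReal.ofReal (1 / (2 * s)) := by
    rw [setLIntegral_congr_fun measurableSet_Ioi (g := fun t => ENNReal.ofReal (t ^ (-1 - 2 * s)))
      fun t ht => by rw [min_eq_right (one_le_pow₀ (le_of_lt ht)), mul_one],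
      setLIntegral_Ioi_rpow (by linarith) one_pos, Real.one_rpow]
    ring_nf
  rw [hnear, hfar, ← ofReal_add (by rw [one_div_nonneg]; linarith) (by positivity)]
  congr 1
  field_simp [show (1 : ℝ) - s ≠ 0 by linarith]
  ring

noncomputable def interpConst (s : ℝ) : ℝ≥0∞ :=
  ∫⁻ t in Ioi 0, ENNReal.ofReal (t ^ (-1 - 2 * s) * (t ^ 2 / (1 + t ^ 2)))

lemma interpConst_le {s : ℝ} (hs0 : 0 < s) (hs1 : s < 1) :
    interpConst s ≤ ENNReal.ofReal (1 / (2 * s * (1 - s))) := by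
  rw [← setLIntegral_Ioi_zero_rpow_mul_min_sq_one hs0 hs1]
  exact setLIntegral_mono' measurableSet_Ioi fun t ht => ENNReal.ofReal_le_ofReal <|
    mul_le_mul_of_nonneg_left (sq_div_one_add_sq_le_min t) (rpow_nonneg (le_of_lt ht) _)

lemma le_interpConst {s : ℝ} (hs0 : 0 < s) (hs1 : s < 1) :
    ENNReal.ofReal (1 / (4 * s * (1 - s))) ≤ interpConst s := by
  have hhalf : 1 / (4 * s * (1 - s)) = 2⁻¹ * (1 / (2 * s * (1 - s))) := by
    field_simp
    ring
  rw [hhalf, ENNReal.ofReal_mul (by norm_num),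
    ← setLIntegral_Ioi_zero_rpow_mul_min_sq_one hs0 hs1,
    ← lintegral_const_mul' _ _ ofReal_ne_top]
  refine setLIntegral_mono' measurableSet_Ioi fun t ht => ?_
  rw [← ENNReal.ofReal_mul (by norm_num)]
  refine ENNReal.ofReal_le_ofReal ?_
  have := mul_le_mul_of_nonneg_left (min_sq_one_div_two_le t)
    (rpow_nonneg (le_of_lt ht) (-1 - 2 * s))
  linarith

lemma ofReal_inv_pi_le_mul_interpConst {s : ℝ} (hs0 : 0 < s) (hs1 : s < 1) :
    ENNReal.ofReal (1 / π) ≤ ENNReal.ofReal (2 * sin (π * s) / π) * interpConst s := by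
  have hsin := two_mul_mul_one_sub_le_sin_pi_mul hs0.le hs1.le
  have hs : 0 < s * (1 - s) := mul_pos hs0 (by linarith)
  calc ENNReal.ofReal (1 / π)
      ≤ ENNReal.ofReal (2 * sin (π * s) / π * (1 / (4 * s * (1 - s)))) := by
        refine ENNReal.ofReal_le_ofReal ?_
        rw [div_mul_div_comm, mul_one, div_le_div_iff₀ pi_pos (by positivity)]
        nlinarith [pi_pos]
    _ ≤ ENNReal.ofReal (2 * sin (π * s) / π) * interpConst s := by
        rw [ENNReal.ofReal_mul (div_nonneg (by linarith) pi_pos.le)]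
        gcongr
        exact le_interpConst hs0 hs1

lemma mul_interpConst_le_ofReal_two {s : ℝ} (hs0 : 0 < s) (hs1 : s < 1) :
    ENNReal.ofReal (2 * sin (π * s) / π) * interpConst s ≤ ENNReal.ofReal 2 := by
  have hsin := sin_pi_mul_le hs0.le hs1.le
  have hs : 0 < s * (1 - s) := mul_pos hs0 (by linarith)
  calc ENNReal.ofReal (2 * sin (π * s) / π) * interpConst s
      ≤ ENNReal.ofReal (2 * sin (π * s) / π) * ENNReal.ofReal (1 / (2 * s * (1 - s))) := by
        gcongr
        exact interpConst_le hs0 hs1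
    _ ≤ ENNReal.ofReal 2 := by
        rw [← ENNReal.ofReal_mul' (by positivity)]
        refine ENNReal.ofReal_le_ofReal ?_
        rw [div_mul_div_comm, mul_one, div_le_iff₀ (by positivity)]
        nlinarith [pi_pos]

lemma setLIntegral_Ioi_zero_comp_mul_left {c : ℝ} (hc : 0 < c) (F : ℝ → ℝ≥0∞) :
    ∫⁻ t in Ioi 0, F t = ENNReal.ofReal c * ∫⁻ u in Ioi 0, F (c * u) := by
  have hsubst := lintegral_image_eq_lintegral_abs_deriv_mul (measurableSet_Ioi (a := 0))
    (fun u _ => ((hasDerivAt_id' u).const_mul c).hasDerivWithinAt)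
    (mul_right_injective₀ hc.ne').injOn F
  rw [image_mul_left_Ioi hc, mul_zero] at hsubst
  simp only [mul_one, abs_of_pos hc] at hsubst
  rw [hsubst, lintegral_const_mul' _ _ ofReal_ne_top]

lemma setLIntegral_Ioi_zero_rpow_mul_parallel {P Q : ℝ} (hP : 0 < P) (hQ : 0 < Q) (s : ℝ) :
    ∫⁻ t in Ioi 0, ENNReal.ofReal (t ^ (-1 - 2 * s) * (P * (t ^ 2 * Q) / (P + t ^ 2 * Q)))
      = ENNReal.ofReal (P ^ (1 - s) * Q ^ s) * interpConst s := by
  set c := √(P / Q)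
  have hc : 0 < c := sqrt_pos.2 (div_pos hP hQ)
  have hcQ : c ^ 2 * Q = P := by rw [sq_sqrt (div_pos hP hQ).le, div_mul_cancel₀ _ hQ.ne']
  have hconst : c * c ^ (-1 - 2 * s) * P = P ^ (1 - s) * Q ^ s := by
    have hc2 : c ^ (2 : ℝ) = P / Q := by rw [Real.rpow_two, sq_sqrt (div_pos hP hQ).le]
    have hmul := rpow_add hc 1 (-1 - 2 * s)
    rw [Real.rpow_one] at hmul
    rw [← hmul, show 1 + (-1 - 2 * s) = 2 * -s by ring,
      rpow_mul hc.le, hc2, div_rpow hP.le hQ.le, rpow_neg hQ.le, rpow_neg hP.le, rpow_sub hP,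
      Real.rpow_one]
    field_simp
  rw [setLIntegral_Ioi_zero_comp_mul_left hc, interpConst,
    ← lintegral_const_mul' _ _ ofReal_ne_top, ← lintegral_const_mul' _ _ ofReal_ne_top]
  refine setLIntegral_congr_fun measurableSet_Ioi fun u hu => ?_
  rw [← ENNReal.ofReal_mul hc.le, ← ENNReal.ofReal_mul (by positivity)]
  congr 1
  have hu : (0 : ℝ) < u := hu
  have hparallel :
      P * ((c * u) ^ 2 * Q) / (P + (c * u) ^ 2 * Q) = P * (u ^ 2 / (1 + u ^ 2)) := by
    rw [show (c * u) ^ 2 * Q = P * u ^ 2 by rw [← hcQ]; ring]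
    field_simp
  rw [hparallel, mul_rpow hc.le hu.le, ← hconst]
  ring

theorem wK2sq_eq_lintegral {Ω : Type*} [MeasurableSpace Ω] (μ : Measure Ω) {w0 w1 : Ω → ℝ}
    (hw0m : Measurable w0) (hw1m : Measurable w1) (hw0 : ∀ x, 0 < w0 x) (hw1 : ∀ x, 0 < w1 x)
    (t : ℝ) {v : Ω → ℝ} (hv : Measurable v) :
    wK2sq μ w0 w1 t v = ∫⁻ x,
      ENNReal.ofReal (v x ^ 2 * (w0 x * (t ^ 2 * w1 x) / (w0 x + t ^ 2 * w1 x))) ∂μ := by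
  have hw1t : ∀ x, 0 ≤ t ^ 2 * w1 x := fun x => mul_nonneg (sq_nonneg t) (hw1 x).le
  have hden : ∀ x, w0 x + t ^ 2 * w1 x ≠ 0 :=
    fun x => (add_pos_of_pos_of_nonneg (hw0 x) (hw1t x)).ne'
  have hsum : ∀ v0 v1 : Ω → ℝ, Measurable v0 →
      (∫⁻ x, ENNReal.ofReal (v0 x ^ 2 * w0 x) ∂μ)
        + ENNReal.ofReal (t ^ 2) * ∫⁻ x, ENNReal.ofReal (v1 x ^ 2 * w1 x) ∂μ
      = ∫⁻ x, ENNReal.ofReal (v0 x ^ 2 * w0 x + v1 x ^ 2 * (t ^ 2 * w1 x)) ∂μ := by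
    intro v0 v1 hv0
    rw [← lintegral_const_mul' _ _ ofReal_ne_top, ← lintegral_add_left (by fun_prop)]
    refine lintegral_congr fun x => ?_
    rw [← ENNReal.ofReal_mul (sq_nonneg t), ← ENNReal.ofReal_add
      (mul_nonneg (sq_nonneg _) (hw0 x).le)
      (mul_nonneg (sq_nonneg t) (mul_nonneg (sq_nonneg _) (hw1 x).le))]
    ring_nf
  apply le_antisymm
  · -- the pointwise minimizer of `v₀² w₀ + v₁² t² w₁` subject to `v₀ + v₁ = v`
    refine sInf_le ⟨fun x => v x * (t ^ 2 * w1 x / (w0 x + t ^ 2 * w1 x)),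
      fun x => v x * (w0 x / (w0 x + t ^ 2 * w1 x)), by fun_prop, by fun_prop, ?_, ?_⟩
    · funext x
      simp only [Pi.add_apply]
      field_simp [hden x]
      ring
    · rw [hsum _ _ (by fun_prop)]
      refine lintegral_congr fun x => ?_
      rw [sq_mul_add_sq_mul_eq (hden x)]
  · refine le_sInf ?_
    rintro r ⟨v0, v1, hv0, -, rfl, rfl⟩
    rw [hsum v0 v1 hv0]
    exact lintegral_mono fun x => ENNReal.ofReal_le_ofReal <|
      sq_add_mul_div_le (hw0 x).le (hw1t x) _ _

theorem setLIntegral_Ioi_zero_rpow_mul_wK2sq {Ω : Type*} [MeasurableSpace Ω] (μ : Measure Ω)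
    [SFinite μ] {w0 w1 : Ω → ℝ} (hw0m : Measurable w0) (hw1m : Measurable w1)
    (hw0 : ∀ x, 0 < w0 x) (hw1 : ∀ x, 0 < w1 x) (s : ℝ) {v : Ω → ℝ} (hv : Measurable v) :
    ∫⁻ t in Ioi 0, ENNReal.ofReal (t ^ (-1 - 2 * s)) * wK2sq μ w0 w1 t v
      = interpConst s * ∫⁻ x, ENNReal.ofReal (v x ^ 2 * (w0 x ^ (1 - s) * w1 x ^ s)) ∂μ := by
  calc ∫⁻ t in Ioi 0, ENNReal.ofReal (t ^ (-1 - 2 * s)) * wK2sq μ w0 w1 t v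
      = ∫⁻ t in Ioi 0, ∫⁻ x, ENNReal.ofReal (v x ^ 2) * ENNReal.ofReal
          (t ^ (-1 - 2 * s) * (w0 x * (t ^ 2 * w1 x) / (w0 x + t ^ 2 * w1 x))) ∂μ := by
        refine setLIntegral_congr_fun measurableSet_Ioi fun t ht => ?_
        rw [wK2sq_eq_lintegral μ hw0m hw1m hw0 hw1 t hv,
          ← lintegral_const_mul' _ _ ofReal_ne_top]
        refine lintegral_congr fun x => ?_
        rw [← ENNReal.ofReal_mul (rpow_nonneg (le_of_lt ht) _),
          ← ENNReal.ofReal_mul (sq_nonneg _)]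
        ring_nf
    _ = ∫⁻ x, ENNReal.ofReal (v x ^ 2) * (ENNReal.ofReal (w0 x ^ (1 - s) * w1 x ^ s)
          * interpConst s) ∂μ := by
        rw [lintegral_lintegral_swap (by fun_prop)]
        refine lintegral_congr fun x => ?_
        rw [lintegral_const_mul' _ _ ofReal_ne_top,
          setLIntegral_Ioi_zero_rpow_mul_parallel (hw0 x) (hw1 x)]
    _ = ∫⁻ x, ENNReal.ofReal (v x ^ 2 * (w0 x ^ (1 - s) * w1 x ^ s)) * interpConst s ∂μ :=
        lintegral_congr fun x => by rw [← mul_assoc, ← ENNReal.ofReal_mul (sq_nonneg _)]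
    _ = _ := by rw [lintegral_mul_const _ (by fun_prop), mul_comm]

theorem stmt_15 {Ω : Type*} [MeasurableSpace Ω] (μ : Measure Ω) [SigmaFinite μ]
    (w0 w1 : Ω → ℝ) (hw0m : Measurable w0) (hw1m : Measurable w1)
    (hw0 : ∀ x, 0 < w0 x) (hw1 : ∀ x, 0 < w1 x) :
    ∃ c C : ℝ, 0 < c ∧ 0 < C ∧
      ∀ s : ℝ, 0 < s → s < 1 → ∀ v : Ω → ℝ, Measurable v →
        ENNReal.ofReal c *
            (∫⁻ x, ENNReal.ofReal ((v x)^2 * (w0 x ^ (1-s) * w1 x ^ s)) ∂μ)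
          ≤ ENNReal.ofReal (2 * Real.sin (π*s) / π) *
              ∫⁻ t in Set.Ioi (0:ℝ), ENNReal.ofReal (t ^ (-1-2*s)) * wK2sq μ w0 w1 t v ∧
        ENNReal.ofReal (2 * Real.sin (π*s) / π) *
            ∫⁻ t in Set.Ioi (0:ℝ), ENNReal.ofReal (t ^ (-1-2*s)) * wK2sq μ w0 w1 t v
          ≤ ENNReal.ofReal C *
              (∫⁻ x, ENNReal.ofReal ((v x)^2 * (w0 x ^ (1-s) * w1 x ^ s)) ∂μ) := by
  refine ⟨1 / π, 2, by positivity, two_pos, fun s hs0 hs1 v hv => ?_⟩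
  rw [setLIntegral_Ioi_zero_rpow_mul_wK2sq μ hw0m hw1m hw0 hw1 s hv, ← mul_assoc]
  exact ⟨by gcongr; exact ofReal_inv_pi_le_mul_interpConst hs0 hs1,
    by gcongr; exact mul_interpConst_le_ofReal_two hs0 hs1⟩
end
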